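/- Let n ≥ 2, ρ = exp(2πi/n), s ∈ ℂ nonzero, Γ ∈ ℝ nonzero, and ω = (n−1)·Γ/(2·|s|²). (a) There is exactly one real x > 0 with x ≠ 1 such that the point z = s·x is co-rotating, i.e., satisfies i·Γ·n·conj(z)^{n−1}/(conj(z)ⁿ − conj(s)ⁿ) = i·ω·z (a co-rotating point on a ray through a vertex). (b) If n = 2, there is exactly one real x > 0 such that z = s·x·exp(iπ/n) is co-rotating; if n ≥ 3, there are exactly two such x (co-rotating points on a ray through the midpoint of a side). -/

import Mathlib

/-- `CoRotates n s Γ ω z` : the point `z` co-rotates with the regular `n`-gon of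
vortices at `s ρᵏ` with equal vorticities `Γ`, i.e. the velocity
`i Γ n conj(z)^{n−1}/(conj(z)ⁿ − conj(s)ⁿ)` generated by the polygon at `z`
equals `i ω z`. -/
def CoRotates (n : ℕ) (s : ℂ) (Γ ω : ℝ) (z : ℂ) : Prop :=
  Complex.I * (Γ : ℂ) * n * (starRingEnd ℂ z) ^ (n - 1) /
      ((starRingEnd ℂ z) ^ n - (starRingEnd ℂ s) ^ n)
    = Complex.I * (ω : ℂ) * z

open Set

noncomputable def Gre (n : ℕ) (ε : ℝ) (x : ℝ) : ℝ :=
  ((n : ℝ) - 1) * x ^ n - 2 * (n : ℝ) * x ^ (n - 2) + ε * ((n : ℝ) - 1)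

lemma Gre_continuous (n : ℕ) (ε : ℝ) : Continuous (Gre n ε) := by
  unfold Gre; fun_prop

lemma Gre_hasDerivAt (l : ℕ) (ε x : ℝ) :
    HasDerivAt (Gre (l + 3) ε)
      (((l : ℝ) + 3) * x ^ l * (((l : ℝ) + 2) * x ^ 2 - 2 * ((l : ℝ) + 1))) x := by
  have h := (((hasDerivAt_pow (l + 3) x).const_mul (((l : ℝ) + 2))).sub
    ((hasDerivAt_pow (l + 1) x).const_mul (2 * ((l : ℝ) + 3)))).add_const (ε * ((l : ℝ) + 2))
  have hf : Gre (l + 3) ε = fun x : ℝ =>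
      (((l : ℝ) + 2) * x ^ (l + 3) - 2 * ((l : ℝ) + 3) * x ^ (l + 1)) + ε * ((l : ℝ) + 2) := by
    funext y
    have e2 : (l + 3) - 2 = l + 1 := rfl
    simp only [Gre, e2]
    push_cast
    ring
  rw [hf]
  refine h.congr_deriv ?_
  have e1 : l + 3 - 1 = l + 2 := rfl
  have e3 : l + 1 - 1 = l := rfl
  rw [e1, e3]
  push_cast
  rw [pow_add]
  ring

noncomputable def cc (l : ℕ) : ℝ := Real.sqrt (2 * ((l : ℝ) + 1) / ((l : ℝ) + 2))

lemma cc_sq (l : ℕ) : cc l ^ 2 = 2 * ((l : ℝ) + 1) / ((l : ℝ) + 2) := by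
  rw [cc, Real.sq_sqrt]; positivity

lemma one_le_cc (l : ℕ) : 1 ≤ cc l := by
  have h : (1 : ℝ) ≤ 2 * ((l : ℝ) + 1) / ((l : ℝ) + 2) := by
    rw [le_div_iff₀ (by positivity)]
    nlinarith [Nat.cast_nonneg (α := ℝ) l]
  calc (1 : ℝ) = Real.sqrt 1 := by simp
    _ ≤ cc l := Real.sqrt_le_sqrt h

lemma cc_pos (l : ℕ) : 0 < cc l := lt_of_lt_of_le one_pos (one_le_cc l)

lemma Gre_anti (l : ℕ) (ε : ℝ) : StrictAntiOn (Gre (l + 3) ε) (Icc 0 (cc l)) := by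
  apply strictAntiOn_of_deriv_neg (convex_Icc _ _) (Gre_continuous _ _).continuousOn
  intro x hx
  rw [interior_Icc] at hx
  rw [(Gre_hasDerivAt l ε x).deriv]
  have hx0 : 0 < x := hx.1
  have hx2 : x ^ 2 < cc l ^ 2 := by
    have := hx.2
    nlinarith [hx0.le, (cc_pos l).le]
  rw [cc_sq] at hx2
  have h2 : ((l : ℝ) + 2) * x ^ 2 - 2 * ((l : ℝ) + 1) < 0 := by
    rw [lt_div_iff₀ (by positivity)] at hx2
    nlinarith
  have hxl : (0 : ℝ) < x ^ l := pow_pos hx0 l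
  have hl3 : (0 : ℝ) < (l : ℝ) + 3 := by positivity
  nlinarith [mul_pos (mul_pos hl3 hxl) (neg_pos.mpr h2)]

lemma Gre_mono (l : ℕ) (ε : ℝ) : StrictMonoOn (Gre (l + 3) ε) (Ici (cc l)) := by
  apply strictMonoOn_of_deriv_pos (convex_Ici _) (Gre_continuous _ _).continuousOn
  intro x hx
  rw [interior_Ici] at hx
  rw [(Gre_hasDerivAt l ε x).deriv]
  have hx0 : 0 < x := lt_of_le_of_lt (cc_pos l).le hx
  have hcx : cc l < x := hx
  have hx2 : cc l ^ 2 < x ^ 2 := by nlinarith [(cc_pos l).le]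
  rw [cc_sq] at hx2
  have h2 : 0 < ((l : ℝ) + 2) * x ^ 2 - 2 * ((l : ℝ) + 1) := by
    rw [div_lt_iff₀ (by positivity)] at hx2
    nlinarith
  have hxl : (0 : ℝ) < x ^ l := pow_pos hx0 l
  positivity

lemma Gre_big (l : ℕ) (ε : ℝ) (hε : -1 ≤ ε) :
    0 < Gre (l + 3) ε (cc l + 2 * ((l : ℝ) + 3)) := by
  set M : ℝ := cc l + 2 * ((l : ℝ) + 3) with hM
  have hM6 : 2 * ((l : ℝ) + 3) ≤ M := by
    have := (cc_pos l).le
    simp [hM]; linarith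
  have hM1 : (1 : ℝ) ≤ M := by nlinarith [Nat.cast_nonneg (α := ℝ) l]
  have ht : (1 : ℝ) ≤ M ^ (l + 1) := one_le_pow₀ hM1
  have hpow : M ^ (l + 3) = M ^ (l + 1) * M ^ 2 := by rw [← pow_add]
  have e2 : (l + 3) - 2 = l + 1 := rfl
  simp only [Gre, e2, hpow]
  push_cast
  have hl0 : (0 : ℝ) ≤ (l : ℝ) := Nat.cast_nonneg l
  have hA : ((l : ℝ) + 2) * M ^ 2 - 2 * ((l : ℝ) + 3) - ((l : ℝ) + 2) > 0 := by
    nlinarith [sq_nonneg (M - 2 * ((l : ℝ) + 3))]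
  have ht' : ((l : ℝ) + 2) * M ^ 2 - 2 * ((l : ℝ) + 3) ≤
      M ^ (l + 1) * (((l : ℝ) + 2) * M ^ 2 - 2 * ((l : ℝ) + 3)) :=
    le_mul_of_one_le_left (by linarith) ht
  have hε2 : -((l : ℝ) + 2) ≤ ε * ((l : ℝ) + 2) := by nlinarith
  nlinarith [ht', hA, hε2]

lemma Gre_zero (l : ℕ) (ε : ℝ) : Gre (l + 3) ε 0 = ε * ((l : ℝ) + 2) := by
  have e2 : (l + 3) - 2 = l + 1 := rfl
  simp only [Gre, e2, zero_pow (Nat.succ_ne_zero _), mul_zero, sub_zero]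
  push_cast; ring

lemma Gre_one (l : ℕ) (ε : ℝ) : Gre (l + 3) ε 1 = ε * ((l : ℝ) + 2) - ((l : ℝ) + 4) := by
  have e2 : (l + 3) - 2 = l + 1 := rfl
  simp only [Gre, e2, one_pow]
  push_cast; ring

lemma Gre_cc_lt (l : ℕ) (ε : ℝ) (hε : ε ≤ 1) : Gre (l + 3) ε (cc l) < 0 := by
  have h1 : Gre (l + 3) ε (cc l) ≤ Gre (l + 3) ε 1 := by
    rcases eq_or_lt_of_le (one_le_cc l) with h | h
    · rw [← h]
    · exact le_of_lt ((Gre_anti l ε) ⟨zero_le_one, one_le_cc l⟩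
        ⟨(cc_pos l).le, le_refl _⟩ h)
  rw [Gre_one] at h1
  nlinarith [Nat.cast_nonneg (α := ℝ) l]

lemma exu_neg (l : ℕ) : ∃! x : ℝ, 0 < x ∧ Gre (l + 3) (-1) x = 0 := by
  have hc1 := one_le_cc l
  have hc := cc_pos l
  set M : ℝ := cc l + 2 * ((l : ℝ) + 3) with hMdef
  have hcM : cc l ≤ M := by
    have : (0:ℝ) ≤ 2 * ((l : ℝ) + 3) := by positivity
    linarith
  have hGc : Gre (l + 3) (-1) (cc l) < 0 := Gre_cc_lt l (-1) (by norm_num)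
  have hGM : 0 < Gre (l + 3) (-1) M := Gre_big l (-1) (le_refl _)
  obtain ⟨b, hbmem, hb⟩ := intermediate_value_Icc hcM
    ((Gre_continuous _ _).continuousOn) ⟨hGc.le, hGM.le⟩
  refine ⟨b, ⟨lt_of_lt_of_le (lt_of_lt_of_le one_pos hc1) hbmem.1, hb⟩, ?_⟩
  rintro y ⟨hy0, hy⟩
  rcases le_or_gt y (cc l) with h | h
  · exfalso
    have : Gre (l + 3) (-1) y < Gre (l + 3) (-1) 0 :=
      (Gre_anti l (-1)) ⟨le_refl _, hc.le⟩ ⟨hy0.le, h⟩ hy0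
    rw [Gre_zero, hy] at this
    nlinarith [Nat.cast_nonneg (α := ℝ) l]
  · exact (Gre_mono l (-1)).injOn (le_of_lt h) hbmem.1 (by rw [hy, hb])

lemma encard_pos_roots (l : ℕ) : {x : ℝ | 0 < x ∧ Gre (l + 3) 1 x = 0}.encard = 2 := by
  have hc1 := one_le_cc l
  have hc := cc_pos l
  have hG0 : Gre (l + 3) 1 0 = (l : ℝ) + 2 := by rw [Gre_zero]; ring
  have hG1 : Gre (l + 3) 1 1 = -2 := by rw [Gre_one]; ring
  -- small root
  obtain ⟨a, hamem, ha⟩ := intermediate_value_Icc' zero_le_one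
    ((Gre_continuous (l + 3) 1).continuousOn)
    (by rw [hG0, hG1]; constructor <;> [norm_num; positivity] :
      (0:ℝ) ∈ Icc (Gre (l+3) 1 1) (Gre (l+3) 1 0))
  have ha0 : 0 < a := by
    rcases eq_or_lt_of_le hamem.1 with h | h
    · exfalso; rw [← h, hG0] at ha; nlinarith [Nat.cast_nonneg (α := ℝ) l]
    · exact h
  -- big root
  set M : ℝ := cc l + 2 * ((l : ℝ) + 3) with hMdef
  have hcM : cc l ≤ M := by
    have : (0:ℝ) ≤ 2 * ((l : ℝ) + 3) := by positivity
    linarith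
  have hGc : Gre (l + 3) 1 (cc l) < 0 := Gre_cc_lt l 1 (le_refl _)
  have hGM : 0 < Gre (l + 3) 1 M := Gre_big l 1 (by norm_num)
  obtain ⟨b, hbmem, hb⟩ := intermediate_value_Icc hcM
    ((Gre_continuous _ _).continuousOn) ⟨hGc.le, hGM.le⟩
  have hb0 : 0 < b := lt_of_lt_of_le (lt_of_lt_of_le one_pos hc1) hbmem.1
  have hab : a ≠ b := by
    have : a ≤ 1 := hamem.2
    have hcb : cc l < b := by
      rcases eq_or_lt_of_le hbmem.1 with h | h
      · exfalso; rw [h, hb] at hGc; exact lt_irrefl _ hGc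
      · exact h
    exact ne_of_lt (lt_of_le_of_lt (this.trans hc1) hcb)
  have hset : {x : ℝ | 0 < x ∧ Gre (l + 3) 1 x = 0} = {a, b} := by
    ext y
    simp only [mem_setOf_eq, mem_insert_iff, mem_singleton_iff]
    constructor
    · rintro ⟨hy0, hy⟩
      rcases le_or_gt y (cc l) with h | h
      · left
        exact (Gre_anti l 1).injOn ⟨hy0.le, h⟩
          ⟨hamem.1, hamem.2.trans hc1⟩ (by rw [hy, ha])
      · right
        exact (Gre_mono l 1).injOn (le_of_lt h) hbmem.1 (by rw [hy, hb])
    · rintro (rfl | rfl)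
      · exact ⟨ha0, ha⟩
      · exact ⟨hb0, hb⟩
  rw [hset, Set.encard_pair hab]

lemma Gre_two (ε x : ℝ) : Gre 2 ε x = x ^ 2 - 4 + ε := by
  simp [Gre]; ring

lemma eq_iff_Gre (n : ℕ) (hn : 2 ≤ n) (Γ : ℝ) (hΓ : Γ ≠ 0) (a : ℝ) (ha : 0 < a)
    (ω : ℝ) (hω : ω = ((n : ℝ) - 1) * Γ / (2 * a)) (ε x : ℝ) (hx : 0 < x) :
    Γ * (n : ℝ) * x ^ (n - 1) = ω * a * x * (x ^ n + ε) ↔ Gre n ε x = 0 := by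
  obtain ⟨m, rfl⟩ : ∃ m, n = m + 2 := ⟨n - 2, by omega⟩
  have hωa : ω * a = ((m : ℝ) + 1) * Γ / 2 := by
    rw [hω]; field_simp; push_cast; ring
  have e1 : (m + 2) - 1 = m + 1 := rfl
  have e2 : (m + 2) - 2 = m := rfl
  have key : Γ * ((m + 2 : ℕ) : ℝ) * x ^ ((m + 2) - 1) - ω * a * x * (x ^ (m + 2) + ε)
      = -(Γ * x / 2) * Gre (m + 2) ε x := by
    rw [hωa]
    simp only [Gre, e1, e2]
    push_cast
    ring
  constructor
  · intro h
    have h0 : -(Γ * x / 2) * Gre (m + 2) ε x = 0 := by rw [← key]; linarith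
    rcases mul_eq_zero.mp h0 with h1 | h1
    · exfalso
      have : Γ * x ≠ 0 := mul_ne_zero hΓ (ne_of_gt hx)
      apply this
      linarith
    · exact h1
  · intro h
    have := key
    rw [h, mul_zero] at this
    linarith

lemma sq_abs_complex (s : ℂ) : ((‖s‖ : ℝ) : ℂ) ^ 2 = s * starRingEnd ℂ s := by
  rw [Complex.mul_conj, Complex.normSq_eq_norm_sq]
  push_cast
  ring

lemma corotates_vertex_iff (n : ℕ) (hn : 2 ≤ n) (s : ℂ) (hs : s ≠ 0) (Γ ω x : ℝ)
    (hx : 0 < x) (hx1 : x ≠ 1) :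
    CoRotates n s Γ ω (s * (x : ℂ)) ↔
      Γ * (n : ℝ) * x ^ (n - 1) = ω * (‖s‖) ^ 2 * x * (x ^ n + (-1)) := by
  have hcs : starRingEnd ℂ s ≠ 0 := by
    simpa using hs
  have hxn : x ^ n ≠ 1 := by
    rcases lt_or_gt_of_ne hx1 with h | h
    · exact ne_of_lt (pow_lt_one₀ hx.le h (by omega))
    · exact ne_of_gt (one_lt_pow₀ h (by omega))
  have hconj : starRingEnd ℂ (s * (x : ℂ)) = starRingEnd ℂ s * (x : ℂ) := by
    simp [Complex.conj_ofReal]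
  have hD : (starRingEnd ℂ (s * (x : ℂ))) ^ n - (starRingEnd ℂ s) ^ n
      = (starRingEnd ℂ s) ^ n * ((x : ℂ) ^ n - 1) := by
    rw [hconj]; ring
  have hDne : (starRingEnd ℂ (s * (x : ℂ))) ^ n - (starRingEnd ℂ s) ^ n ≠ 0 := by
    rw [hD]
    refine mul_ne_zero (pow_ne_zero _ hcs) (sub_ne_zero.mpr ?_)
    intro h
    apply hxn
    have : ((x ^ n : ℝ) : ℂ) = ((1 : ℝ) : ℂ) := by push_cast; rw [h]
    exact_mod_cast this
  obtain ⟨m, hm⟩ : ∃ m, n = m + 1 := ⟨n - 1, by omega⟩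
  have hK : Complex.I * (starRingEnd ℂ s) ^ m ≠ 0 :=
    mul_ne_zero Complex.I_ne_zero (pow_ne_zero _ hcs)
  rw [CoRotates, div_eq_iff hDne]
  subst hm
  have e1 : (m + 1) - 1 = m := rfl
  rw [e1]
  have h1 : Complex.I * (Γ : ℂ) * ((m + 1 : ℕ) : ℂ) * (starRingEnd ℂ (s * (x : ℂ))) ^ m
      = (Complex.I * (starRingEnd ℂ s) ^ m) * ((Γ * ((m + 1 : ℕ) : ℝ) * x ^ m : ℝ) : ℂ) := by
    rw [hconj]; push_cast; ring
  have h2 : Complex.I * (ω : ℂ) * (s * (x : ℂ)) *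
        ((starRingEnd ℂ (s * (x : ℂ))) ^ (m + 1) - (starRingEnd ℂ s) ^ (m + 1))
      = (Complex.I * (starRingEnd ℂ s) ^ m) *
        ((ω * (‖s‖) ^ 2 * x * (x ^ (m + 1) + (-1)) : ℝ) : ℂ) := by
    rw [hconj]
    push_cast
    rw [sq_abs_complex]
    ring
  rw [h1, h2]
  constructor
  · intro h
    exact_mod_cast mul_left_cancel₀ hK h
  · intro h
    rw [h]

lemma corotates_mid_iff (n : ℕ) (hn : 2 ≤ n) (s : ℂ) (hs : s ≠ 0) (Γ ω x : ℝ)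
    (hx : 0 < x) :
    CoRotates n s Γ ω (s * (x : ℂ) * Complex.exp (Real.pi * Complex.I / n)) ↔
      Γ * (n : ℝ) * x ^ (n - 1) = ω * (‖s‖) ^ 2 * x * (x ^ n + 1) := by
  have hcs : starRingEnd ℂ s ≠ 0 := by simpa using hs
  have hn0 : (n : ℂ) ≠ 0 := Nat.cast_ne_zero.mpr (by omega)
  set e : ℂ := Complex.exp (Real.pi * Complex.I / n) with hedef
  have hce : starRingEnd ℂ e = Complex.exp (-(Real.pi * Complex.I / n)) := by
    rw [hedef, ← Complex.exp_conj]
    congr 1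
    simp [map_div₀, Complex.conj_I]
    ring
  have hee : starRingEnd ℂ e * e = 1 := by
    rw [hce, hedef, ← Complex.exp_add]
    simp
  have hcen : (starRingEnd ℂ e) ^ n = -1 := by
    rw [hce, ← Complex.exp_nat_mul]
    have harg : (n : ℂ) * -(Real.pi * Complex.I / n) = -(Real.pi * Complex.I) := by
      field_simp
    rw [harg, Complex.exp_neg, Complex.exp_pi_mul_I]
    norm_num
  obtain ⟨m, hm⟩ : ∃ m, n = m + 1 := ⟨n - 1, by omega⟩
  subst hm
  have hcem : (starRingEnd ℂ e) ^ m = -e := by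
    calc (starRingEnd ℂ e) ^ m = (starRingEnd ℂ e) ^ m * (starRingEnd ℂ e * e) := by
          rw [hee, mul_one]
      _ = (starRingEnd ℂ e) ^ (m + 1) * e := by ring
      _ = -1 * e := by rw [hcen]
      _ = -e := by ring
  have hconj : starRingEnd ℂ (s * (x : ℂ) * e) = starRingEnd ℂ s * (x : ℂ) * starRingEnd ℂ e := by
    simp [Complex.conj_ofReal]
  have hD : (starRingEnd ℂ (s * (x : ℂ) * e)) ^ (m + 1) - (starRingEnd ℂ s) ^ (m + 1)
      = -((starRingEnd ℂ s) ^ (m + 1) * ((x : ℂ) ^ (m + 1) + 1)) := by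
    rw [hconj, mul_pow, mul_pow, hcen]
    ring
  have hxpos : (0 : ℝ) < x ^ (m + 1) + 1 := by positivity
  have hDne : (starRingEnd ℂ (s * (x : ℂ) * e)) ^ (m + 1) - (starRingEnd ℂ s) ^ (m + 1) ≠ 0 := by
    rw [hD, neg_ne_zero]
    refine mul_ne_zero (pow_ne_zero _ hcs) ?_
    have : ((x : ℂ) ^ (m + 1) + 1) = (((x ^ (m + 1) + 1 : ℝ)) : ℂ) := by push_cast; ring
    rw [this]
    exact_mod_cast ne_of_gt hxpos
  have he0 : e ≠ 0 := Complex.exp_ne_zero _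
  have hK : Complex.I * e * (starRingEnd ℂ s) ^ m ≠ 0 :=
    mul_ne_zero (mul_ne_zero Complex.I_ne_zero he0) (pow_ne_zero _ hcs)
  rw [CoRotates, div_eq_iff hDne]
  have e1 : (m + 1) - 1 = m := rfl
  rw [e1, hD]
  have h1 : Complex.I * (Γ : ℂ) * ((m + 1 : ℕ) : ℂ) * (starRingEnd ℂ (s * (x : ℂ) * e)) ^ m
      = (Complex.I * e * (starRingEnd ℂ s) ^ m) *
        ((-(Γ * ((m + 1 : ℕ) : ℝ) * x ^ m) : ℝ) : ℂ) := by
    rw [hconj, mul_pow, mul_pow, hcem]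
    push_cast
    ring
  have h2 : Complex.I * (ω : ℂ) * (s * (x : ℂ) * e) *
        (-((starRingEnd ℂ s) ^ (m + 1) * ((x : ℂ) ^ (m + 1) + 1)))
      = (Complex.I * e * (starRingEnd ℂ s) ^ m) *
        ((-(ω * (‖s‖) ^ 2 * x * (x ^ (m + 1) + 1)) : ℝ) : ℂ) := by
    push_cast
    rw [sq_abs_complex]
    ring
  rw [h1, h2]
  constructor
  · intro h
    have h' := mul_left_cancel₀ hK h
    have h'' : -(Γ * ((m + 1 : ℕ) : ℝ) * x ^ m) = -(ω * (‖s‖) ^ 2 * x * (x ^ (m + 1) + 1)) := by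
      exact_mod_cast h'
    push_cast at h'' ⊢
    linarith
  · intro h
    have h'' : (-(Γ * ((m + 1 : ℕ) : ℝ) * x ^ m) : ℝ) = -(ω * (‖s‖) ^ 2 * x * (x ^ (m + 1) + 1)) := by
      push_cast at h ⊢
      linarith
    rw [h'']

/-- **Co-rotating points of a regular polygon of identical vortices.**
(a) On the ray through a vertex (`z = s x`, `x > 0`, `x ≠ 1`) there is exactly one
co-rotating point. (b) On the ray through the midpoint of a side
(`z = s x e^{iπ/n}`, `x > 0`) there is exactly one co-rotating point if `n = 2`,
and exactly two if `n ≥ 3`. -/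
theorem corotating_points_one_polygon_count
    (n : ℕ) (hn : 2 ≤ n)
    (ρ : ℂ) (hρ : ρ = Complex.exp (2 * Real.pi * Complex.I / n))
    (s : ℂ) (hs : s ≠ 0)
    (Γ : ℝ) (hΓ : Γ ≠ 0)
    (ω : ℝ) (hω : ω = (n - 1) * Γ / (2 * ‖s‖ ^ 2)) :
    (∃! x : ℝ, 0 < x ∧ x ≠ 1 ∧ CoRotates n s Γ ω (s * x))
    ∧ (n = 2 → ∃! x : ℝ, 0 < x ∧
        CoRotates n s Γ ω (s * x * Complex.exp (Real.pi * Complex.I / n)))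
    ∧ (3 ≤ n → {x : ℝ | 0 < x ∧
        CoRotates n s Γ ω (s * x * Complex.exp (Real.pi * Complex.I / n))}.encard = 2) := by
  have ha : (0 : ℝ) < ‖s‖ ^ 2 := by
    have := norm_pos_iff.mpr hs
    positivity
  have key_a : ∀ x : ℝ, 0 < x → x ≠ 1 →
      (CoRotates n s Γ ω (s * x) ↔ Gre n (-1) x = 0) := fun x hx hx1 =>
    (corotates_vertex_iff n hn s hs Γ ω x hx hx1).trans
      (eq_iff_Gre n hn Γ hΓ _ ha ω hω (-1) x hx)
  have key_b : ∀ x : ℝ, 0 < x →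
      (CoRotates n s Γ ω (s * x * Complex.exp (Real.pi * Complex.I / n)) ↔
        Gre n 1 x = 0) := fun x hx =>
    (corotates_mid_iff n hn s hs Γ ω x hx).trans
      (eq_iff_Gre n hn Γ hΓ _ ha ω hω 1 x hx)
  refine ⟨?_, ?_, ?_⟩
  · -- part (a)
    rcases eq_or_lt_of_le hn with h2 | h3
    · -- n = 2
      obtain rfl : n = 2 := h2.symm
      have h5 : Real.sqrt 5 ^ 2 = 5 := Real.sq_sqrt (by norm_num)
      have h5p : 0 < Real.sqrt 5 := Real.sqrt_pos.mpr (by norm_num)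
      have h5n1 : Real.sqrt 5 ≠ 1 := by
        intro h; rw [h] at h5; norm_num at h5
      refine ⟨Real.sqrt 5, ⟨h5p, h5n1, (key_a _ h5p h5n1).mpr ?_⟩, ?_⟩
      · rw [Gre_two, h5]; norm_num
      · rintro y ⟨hy0, hy1, hyc⟩
        have hy := (key_a y hy0 hy1).mp hyc
        rw [Gre_two] at hy
        have : y ^ 2 = 5 := by linarith
        rw [← Real.sqrt_sq hy0.le, this]
    · -- n ≥ 3
      obtain ⟨l, rfl⟩ : ∃ l, n = l + 3 := ⟨n - 3, by omega⟩
      obtain ⟨b, ⟨hb0, hbG⟩, hbu⟩ := exu_neg l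
      have hb1 : b ≠ 1 := by
        intro h
        rw [h, Gre_one] at hbG
        nlinarith [Nat.cast_nonneg (α := ℝ) l]
      refine ⟨b, ⟨hb0, hb1, (key_a b hb0 hb1).mpr hbG⟩, ?_⟩
      rintro y ⟨hy0, hy1, hyc⟩
      exact hbu y ⟨hy0, (key_a y hy0 hy1).mp hyc⟩
  · -- part (b), n = 2
    intro h2
    obtain rfl : n = 2 := h2
    have h3 : Real.sqrt 3 ^ 2 = 3 := Real.sq_sqrt (by norm_num)
    have h3p : 0 < Real.sqrt 3 := Real.sqrt_pos.mpr (by norm_num)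
    refine ⟨Real.sqrt 3, ⟨h3p, (key_b _ h3p).mpr ?_⟩, ?_⟩
    · rw [Gre_two, h3]; norm_num
    · rintro y ⟨hy0, hyc⟩
      have hy := (key_b y hy0).mp hyc
      rw [Gre_two] at hy
      have : y ^ 2 = 3 := by linarith
      rw [← Real.sqrt_sq hy0.le, this]
  · -- part (c), n ≥ 3
    intro h3
    obtain ⟨l, rfl⟩ : ∃ l, n = l + 3 := ⟨n - 3, by omega⟩
    have hset : {x : ℝ | 0 < x ∧
        CoRotates (l + 3) s Γ ω (s * x * Complex.exp (Real.pi * Complex.I / (l + 3 : ℕ)))}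
        = {x : ℝ | 0 < x ∧ Gre (l + 3) 1 x = 0} := by
      ext y
      simp only [mem_setOf_eq]
      exact ⟨fun ⟨hy0, hy⟩ => ⟨hy0, (key_b y hy0).mp hy⟩,
        fun ⟨hy0, hy⟩ => ⟨hy0, (key_b y hy0).mpr hy⟩⟩
    rw [hset]
    exact encard_pos_roots l
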